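/- arXiv:1403.0781 — 2 statements merged into one kernel-verified Lean document; each statement's English description precedes it below -/
import Mathlib

section
/- Let n ≥ 1 and m ≥ 2. Let z_1,…,z_n and z^1,…,z^m be real-valued functions on ℝⁿ × ℝᵐ × ℝ^{m×n} (with points written (x, w, W), W = (w^j_i), j = 1,…,m, i = 1,…,n), where each z^j is twice continuously differentiable and each z_i is continuously differentiable. Assume: (a) ∂z^j/∂w^k_i = 0 for all i and all j ≠ k, and (b) ∂z^j/∂w^j_i = −z_i for all i and all j. Then every z_i is independent of the W-variables (i.e. ∂z_i/∂w^k_{i'} = 0 for all k, i'), and for every j the function z^j + Σ_{i=1}^n w^j_i z_i is independent of the W-variables. -/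
/-!
By (b), `z_i = -∂z^j/∂w^j_i` for every `j`. Given `k`, choose `j ≠ k` (possible as `m ≥ 2`);
symmetry of second derivatives and (a) give
`∂z_i/∂w^k_{i'} = -∂/∂w^j_i (∂z^j/∂w^k_{i'}) = 0`. By the product rule the `w^k_{i'}`-derivative
of `Σ_i w^j_i z_i` is then `δ_{jk} z_{i'}`, which cancels `∂z^j/∂w^k_{i'}` by (a) and (b).
-/

noncomputable section

open scoped BigOperators

/-- A point of `ℝⁿ × ℝᵐ × ℝ^{m×n}`, written `(x, w, W)`. -/
abbrev JetPt (n m : ℕ) := (Fin n → ℝ) × (Fin m → ℝ) × (Fin m → Fin n → ℝ)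

/-- The partial derivative `∂f/∂w^j_i` with respect to the jet variable
`w^j_i` (the `(j,i)` entry of the `W`-component). -/
def pdW {n m : ℕ} (j : Fin m) (i : Fin n) (f : JetPt n m → ℝ) (p : JetPt n m) : ℝ :=
  fderiv ℝ f p (0, 0, Pi.single j (Pi.single i 1))

section

variable {𝕜 E F : Type*} [NontriviallyNormedField 𝕜] [IsRCLikeNormedField 𝕜]
  [NormedAddCommGroup E] [NormedSpace 𝕜 E] [NormedAddCommGroup F] [NormedSpace 𝕜 F]

theorem fderiv_fderiv_apply_comm {f : E → F} {p : E} (hf : ContDiffAt 𝕜 2 f p) (v w : E) :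
    fderiv 𝕜 (fun q => fderiv 𝕜 f q v) p w = fderiv 𝕜 (fun q => fderiv 𝕜 f q w) p v := by
  have hf' : DifferentiableAt 𝕜 (fderiv 𝕜 f) p :=
    (hf.fderiv_right (m := 1) le_rfl).differentiableAt one_ne_zero
  rw [fderiv_clm_apply hf' (differentiableAt_const v),
    fderiv_clm_apply hf' (differentiableAt_const w)]
  simpa using (hf.isSymmSndFDerivAt (by simp)) w v

end

section

variable {n m : ℕ}

theorem pdW_comm {f : JetPt n m → ℝ} (hf : ContDiff ℝ 2 f) (j k : Fin m) (i i' : Fin n)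
    (p : JetPt n m) : pdW k i' (pdW j i f) p = pdW j i (pdW k i' f) p :=
  fderiv_fderiv_apply_comm hf.contDiffAt _ _

theorem pdW_neg (j : Fin m) (i : Fin n) (f : JetPt n m → ℝ) (p : JetPt n m) :
    pdW j i (-f) p = -pdW j i f p := by
  simp [pdW, fderiv_neg]

theorem pdW_add {f g : JetPt n m → ℝ} {p : JetPt n m} (hf : DifferentiableAt ℝ f p)
    (hg : DifferentiableAt ℝ g p) (j : Fin m) (i : Fin n) :
    pdW j i (fun q => f q + g q) p = pdW j i f p + pdW j i g p := by
  simp [pdW, fderiv_fun_add hf hg]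

theorem pdW_sum {ι : Type*} {s : Finset ι} {f : ι → JetPt n m → ℝ} {p : JetPt n m}
    (hf : ∀ l ∈ s, DifferentiableAt ℝ (f l) p) (j : Fin m) (i : Fin n) :
    pdW j i (fun q => ∑ l ∈ s, f l q) p = ∑ l ∈ s, pdW j i (f l) p := by
  simp [pdW, fderiv_fun_sum hf]

theorem pdW_mul {f g : JetPt n m → ℝ} {p : JetPt n m} (hf : DifferentiableAt ℝ f p)
    (hg : DifferentiableAt ℝ g p) (j : Fin m) (i : Fin n) :
    pdW j i (fun q => f q * g q) p = f p * pdW j i g p + g p * pdW j i f p := by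
  simp [pdW, fderiv_fun_mul hf hg]

theorem pdW_coord (j k : Fin m) (i i' : Fin n) (p : JetPt n m) :
    pdW k i' (fun q => q.2.2 j i) p = if j = k ∧ i = i' then 1 else 0 := by
  rw [pdW, fderiv_apply (by fun_prop), fderiv_apply (by fun_prop), fderiv.snd (by fun_prop),
    fderiv_snd]
  by_cases hjk : j = k <;> by_cases hii : i = i' <;> simp [hjk, hii]

theorem pdW_sum_coord_mul {g : Fin n → JetPt n m → ℝ} {p : JetPt n m}
    (hg : ∀ i, DifferentiableAt ℝ (g i) p) (j k : Fin m) (i' : Fin n) :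
    pdW k i' (fun q => ∑ i, q.2.2 j i * g i q) p
      = ∑ i, p.2.2 j i * pdW k i' (g i) p + if j = k then g i' p else 0 := by
  have hcoord (i : Fin n) : DifferentiableAt ℝ (fun q : JetPt n m => q.2.2 j i) p := by
    fun_prop
  rw [pdW_sum (f := fun i q => q.2.2 j i * g i q) fun i _ => (hcoord i).fun_mul (hg i)]
  simp only [pdW_mul (hcoord _) (hg _), pdW_coord, Finset.sum_add_distrib]
  by_cases hjk : j = k <;> simp [hjk]

end

theorem lie_backlund_point_symmetry_general (n m : ℕ) (hm : 2 ≤ m)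
    (zLow : Fin n → JetPt n m → ℝ) (zUp : Fin m → JetPt n m → ℝ)
    (hzUp : ∀ j, ContDiff ℝ 2 (zUp j))
    (hzLow : ∀ i, ContDiff ℝ 1 (zLow i))
    (ha : ∀ (i : Fin n) (j k : Fin m), j ≠ k → ∀ p, pdW k i (zUp j) p = 0)
    (hb : ∀ (i : Fin n) (j : Fin m) (p : JetPt n m),
      pdW j i (zUp j) p = -zLow i p) :
    (∀ (i : Fin n) (k : Fin m) (i' : Fin n) (p : JetPt n m),
        pdW k i' (zLow i) p = 0)
    ∧ ∀ (j k : Fin m) (i' : Fin n) (p : JetPt n m),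
        pdW k i' (fun q => zUp j q + ∑ i, q.2.2 j i * zLow i q) p = 0 := by
  have : Nontrivial (Fin m) := Fin.nontrivial_iff_two_le.mpr hm
  have hzLow_eq (i : Fin n) (j : Fin m) : zLow i = -pdW j i (zUp j) := by
    funext q
    rw [Pi.neg_apply, hb, neg_neg]
  have hzLow_W (i : Fin n) (k : Fin m) (i' : Fin n) (p : JetPt n m) :
      pdW k i' (zLow i) p = 0 := by
    obtain ⟨j, hjk⟩ := exists_ne k
    rw [hzLow_eq i j, pdW_neg, pdW_comm (hzUp j), funext (ha i' j k hjk)]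
    simp [pdW]
  refine ⟨hzLow_W, fun j k i' p => ?_⟩
  have hU : DifferentiableAt ℝ (zUp j) p := (hzUp j).differentiable two_ne_zero p
  have hL (i : Fin n) : DifferentiableAt ℝ (zLow i) p := (hzLow i).differentiable one_ne_zero p
  rw [pdW_add hU (by fun_prop), pdW_sum_coord_mul hL]
  simp only [hzLow_W, mul_zero, Finset.sum_const_zero, zero_add]
  rcases eq_or_ne j k with rfl | hjk
  · simp [hb]
  · simp [ha i' j k hjk, hjk]

/-- Lie–Bäcklund: let `n ≥ 1`, `m ≥ 2`, let `z_i` be `C¹` and `z^j` be `C²`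
functions on `ℝⁿ × ℝᵐ × ℝ^{m×n}` with `∂z^j/∂w^k_i = 0` for all `i` and all
`j ≠ k`, and `∂z^j/∂w^j_i = -z_i` for all `i, j`.  Then every `z_i` is
independent of the `W`-variables, and for every `j` the function
`z^j + Σ_i w^j_i z_i` is independent of the `W`-variables. -/
theorem lie_backlund_point_symmetry (n m : ℕ) (hn : 1 ≤ n) (hm : 2 ≤ m)
    (zLow : Fin n → JetPt n m → ℝ) (zUp : Fin m → JetPt n m → ℝ)
    (hzUp : ∀ j, ContDiff ℝ 2 (zUp j))
    (hzLow : ∀ i, ContDiff ℝ 1 (zLow i))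
    (ha : ∀ (i : Fin n) (j k : Fin m), j ≠ k → ∀ p, pdW k i (zUp j) p = 0)
    (hb : ∀ (i : Fin n) (j : Fin m) (p : JetPt n m),
      pdW j i (zUp j) p = -zLow i p) :
    (∀ (i : Fin n) (k : Fin m) (i' : Fin n) (p : JetPt n m),
        pdW k i' (zLow i) p = 0)
    ∧ ∀ (j k : Fin m) (i' : Fin n) (p : JetPt n m),
        pdW k i' (fun q => zUp j q + ∑ i, q.2.2 j i * zLow i q) p = 0 :=
  lie_backlund_point_symmetry_general n m hm zLow zUp hzUp hzLow ha hb

end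
end

section
/- Work on ℝ^{K+4} with coordinates (x, u₀, u₁, v₀, v₁, …, v_K), K ≥ 6, let F be a smooth function of (x, u₀, v₀, u₁, v₁, v₂) regarded as a function on ℝ^{K+4}, and let D = ∂/∂x + u₁∂/∂u₀ + F∂/∂u₁ + Σ_{r=0}^{K−1} v_{r+1}∂/∂v_r. Set α₀ = du₀ − u₁dx, α₁ = du₁ − Fdx, β_r = dv_r − v_{r+1}dx, α := α₁ − F_{v₂}β₁ and A := F_{v₁} + F_{u₁}F_{v₂} − DF_{v₂}. Then L_D α = F_{u₀}α₀ + F_{v₀}β₀ + F_{u₁}α + Aβ₁, where subscripts on F denote partial derivatives. -/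
noncomputable section

open scoped BigOperators

/-- Index set of the coordinates `x, u₀, u₁, v₀, …, v_K` of `ℝ^{K+4}`. -/
abbrev Coord (K : ℕ) := Unit ⊕ Unit ⊕ Unit ⊕ Fin (K + 1)

/-- A point of `ℝ^{K+4}`. -/
abbrev Pt (K : ℕ) := Coord K → ℝ

/-- The coordinate `x`. -/
def ix (K : ℕ) : Coord K := Sum.inl ()
/-- The coordinate `u₀`. -/
def iu0 (K : ℕ) : Coord K := Sum.inr (Sum.inl ())
/-- The coordinate `u₁`. -/
def iu1 (K : ℕ) : Coord K := Sum.inr (Sum.inr (Sum.inl ()))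
/-- The coordinate `v_r`. -/
def iv (K r : ℕ) (h : r < K + 1) : Coord K := Sum.inr (Sum.inr (Sum.inr ⟨r, h⟩))

/-- The partial derivative `∂f/∂(coordinate i)` at a point. -/
def pd {K : ℕ} (i : Coord K) (f : Pt K → ℝ) (p : Pt K) : ℝ :=
  fderiv ℝ f p (Pi.single i 1)

/-- The components of the total derivative vector field
`D = ∂/∂x + u₁∂/∂u₀ + F∂/∂u₁ + Σ_{r=0}^{K-1} v_{r+1}∂/∂v_r`. -/
def Dvf {K : ℕ} (F : Pt K → ℝ) : Pt K → Coord K → ℝ := fun p b =>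
  match b with
  | Sum.inl _ => 1
  | Sum.inr (Sum.inl _) => p (iu1 K)
  | Sum.inr (Sum.inr (Sum.inl _)) => F p
  | Sum.inr (Sum.inr (Sum.inr r)) =>
      if h : (r : ℕ) + 1 < K + 1 then p (iv K ((r : ℕ) + 1) h) else 0

/-- The Lie derivative of a 1-form `ω` (given by its components `ω_c`) along a
vector field `X` (given by its components `X^b`):
`(L_X ω)_c = Σ_b X^b ∂ω_c/∂b + Σ_b ω_b ∂X^b/∂c`. -/
def lieD {K : ℕ} (X ω : Pt K → Coord K → ℝ) : Pt K → Coord K → ℝ := fun p c =>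
  (∑ b : Coord K, X p b * pd b (fun q => ω q c) p)
    + ∑ b : Coord K, ω p b * pd c (fun q => X q b) p

/-- The contact form `α₀ = du₀ - u₁ dx` (components). -/
def α0 (K : ℕ) : Pt K → Coord K → ℝ := fun p c =>
  if c = iu0 K then 1 else if c = ix K then -p (iu1 K) else 0

/-- The contact form `α₁ = du₁ - F dx` (components). -/
def α1 {K : ℕ} (F : Pt K → ℝ) : Pt K → Coord K → ℝ := fun p c =>
  if c = iu1 K then 1 else if c = ix K then -F p else 0

/-- The contact form `β_r = dv_r - v_{r+1} dx` (components), for `r + 1 ≤ K`. -/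
def βf (K r : ℕ) (h : r + 1 < K + 1) : Pt K → Coord K → ℝ := fun p c =>
  if c = iv K r (by omega) then 1 else if c = ix K then -p (iv K (r + 1) h) else 0

/-- The total derivative acting on functions: `Df = Σ_b D^b ∂f/∂b`. -/
def Dop {K : ℕ} (F f : Pt K → ℝ) : Pt K → ℝ := fun p =>
  ∑ b : Coord K, Dvf F p b * pd b f p

/-- The reduced form `α := α₁ - F_{v₂} β₁`. -/
def αred (K : ℕ) (hK : 6 ≤ K) (F : Pt K → ℝ) : Pt K → Coord K → ℝ := fun p c =>
  α1 F p c - pd (iv K 2 (by omega)) F p * βf K 1 (by omega) p c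

/-- The coefficient `A := F_{v₁} + F_{u₁}F_{v₂} - DF_{v₂}`. -/
def Acoef (K : ℕ) (hK : 6 ≤ K) (F : Pt K → ℝ) : Pt K → ℝ := fun p =>
  pd (iv K 1 (by omega)) F p + pd (iu1 K) F p * pd (iv K 2 (by omega)) F p
    - Dop F (pd (iv K 2 (by omega)) F) p

section helperLemmas
variable {K : ℕ}

lemma coord_clm (i : Coord K) :
    (fun q : Pt K => q i) = ⇑(ContinuousLinearMap.proj (R := ℝ) (φ := fun _ : Coord K => ℝ) i) := rfl

lemma diffAt_coord (i : Coord K) (p : Pt K) :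
    DifferentiableAt ℝ (fun q : Pt K => q i) p := by
  rw [coord_clm]
  exact (ContinuousLinearMap.proj (R := ℝ) (φ := fun _ : Coord K => ℝ) i).differentiableAt

lemma pd_coord (b i : Coord K) (p : Pt K) :
    pd b (fun q => q i) p = if i = b then 1 else 0 := by
  rw [pd, coord_clm, ContinuousLinearMap.fderiv]
  simp [Pi.single_apply]

lemma pd_const (b : Coord K) (p : Pt K) (c : ℝ) : pd b (fun _ => c) p = 0 := by
  simp [pd]

lemma pd_neg (b : Coord K) (p : Pt K) (f : Pt K → ℝ) :
    pd b (fun q => -f q) p = -pd b f p := by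
  simp [pd, fderiv_neg]

lemma pd_sub (b : Coord K) (p : Pt K) {f g : Pt K → ℝ}
    (hf : DifferentiableAt ℝ f p) (hg : DifferentiableAt ℝ g p) :
    pd b (fun q => f q - g q) p = pd b f p - pd b g p := by
  simp [pd, fderiv_fun_sub hf hg]

lemma pd_mul (b : Coord K) (p : Pt K) {f g : Pt K → ℝ}
    (hf : DifferentiableAt ℝ f p) (hg : DifferentiableAt ℝ g p) :
    pd b (fun q => f q * g q) p = pd b f p * g p + f p * pd b g p := by
  simp [pd, fderiv_fun_mul hf hg]; ring

lemma contDiff_pd (F : Pt K → ℝ) (hF : ContDiff ℝ (⊤ : ℕ∞) F) (i : Coord K) :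
    ContDiff ℝ (⊤ : ℕ∞) (pd i F) := by
  have h1 : ContDiff ℝ (⊤ : ℕ∞) (fderiv ℝ F) := hF.fderiv_right (by simp)
  exact h1.clm_apply contDiff_const

lemma pd_F_zero (F : Pt K → ℝ) (hF : ContDiff ℝ (⊤ : ℕ∞) F)
    (hdep : ∀ p q : Pt K, p (ix K) = q (ix K) → p (iu0 K) = q (iu0 K) →
      p (iu1 K) = q (iu1 K) →
      (∀ (r : ℕ) (h : r < K + 1), r ≤ 2 → p (iv K r h) = q (iv K r h)) →
      F p = F q)
    (r : ℕ) (h : r < K + 1) (hr : 3 ≤ r) (p : Pt K) :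
    pd (iv K r h) F p = 0 := by
  set v : Pt K := Pi.single (iv K r h) 1 with hv
  have hne : ∀ t : ℝ, F (p + t • v) = F p := by
    intro t
    apply hdep
    · simp [hv, ix, iv, Pi.single_eq_of_ne]
    · simp [hv, iu0, iv, Pi.single_eq_of_ne]
    · simp [hv, iu1, iv, Pi.single_eq_of_ne]
    · intro r' h' hr'
      have : iv K r' h' ≠ iv K r h := by
        simp only [iv, ne_eq, Sum.inr.injEq, Fin.mk.injEq]
        omega
      simp [hv, Pi.single_eq_of_ne this]
  have hline : HasDerivAt (fun t : ℝ => F (p + t • v)) (fderiv ℝ F p v) 0 := by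
    have h1 : HasFDerivAt F (fderiv ℝ F p) p :=
      (hF.differentiable (by simp) p).hasFDerivAt
    have h2 : HasDerivAt (fun t : ℝ => p + t • v) v 0 := by
      simpa using ((hasDerivAt_id (0 : ℝ)).smul_const v).const_add p
    have h1' : HasFDerivAt F (fderiv ℝ F p) ((fun t : ℝ => p + t • v) 0) := by
      simpa using h1
    exact h1'.comp_hasDerivAt 0 h2
  have hconst : (fun t : ℝ => F (p + t • v)) = fun _ => F p := funext hne
  rw [hconst] at hline
  have := hline.unique (hasDerivAt_const 0 (F p))
  simpa [pd, hv] using this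

end helperLemmas

/-- First reduction step of Section 3.2:
`L_D α = F_{u₀}α₀ + F_{v₀}β₀ + F_{u₁}α + Aβ₁` where `α = α₁ - F_{v₂}β₁`. -/
theorem lieD_alpha_reduced (K : ℕ) (hK : 6 ≤ K) (F : Pt K → ℝ)
    (hF : ContDiff ℝ (⊤ : ℕ∞) F)
    (hdep : ∀ p q : Pt K, p (ix K) = q (ix K) → p (iu0 K) = q (iu0 K) →
      p (iu1 K) = q (iu1 K) →
      (∀ (r : ℕ) (h : r < K + 1), r ≤ 2 → p (iv K r h) = q (iv K r h)) →
      F p = F q) :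
    ∀ (p : Pt K) (c : Coord K),
      lieD (Dvf F) (αred K hK F) p c =
        pd (iu0 K) F p * α0 K p c
        + pd (iv K 0 (by omega)) F p * βf K 0 (by omega) p c
        + pd (iu1 K) F p * αred K hK F p c
        + Acoef K hK F p * βf K 1 (by omega) p c := by
  intro p c
  have h0 : (0:ℕ) < K + 1 := by omega
  have h1 : (1:ℕ) < K + 1 := by omega
  have h1' : (1:ℕ) + 1 < K + 1 := by omega
  have h2 : (2:ℕ) < K + 1 := by omega
  have h3 : (3:ℕ) < K + 1 := by omega
  have hFd : ∀ q : Pt K, DifferentiableAt ℝ F q := fun q => (hF.differentiable (by simp)) q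
  have hGd : ∀ q : Pt K, DifferentiableAt ℝ (pd (iv K 2 h2) F) q := fun q =>
    ((contDiff_pd F hF _).differentiable (by simp)) q
  -- second sum, uniform in c
  have hsum2 : (∑ b : Coord K, αred K hK F p b * pd c (fun q => Dvf F q b) p)
      = pd c F p - pd (iv K 2 h2) F p * (if iv K 2 h2 = c then 1 else 0) := by
    have e1 : ∀ a : Unit, αred K hK F p (Sum.inl a) * pd c (fun q => Dvf F q (Sum.inl a)) p = 0 := by
      intro a
      have h : (fun q : Pt K => Dvf F q (Sum.inl a)) = fun _ => (1:ℝ) := rfl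
      rw [h, pd_const, mul_zero]
    have e2 : ∀ a : Unit, αred K hK F p (Sum.inr (Sum.inl a)) * pd c (fun q => Dvf F q (Sum.inr (Sum.inl a))) p = 0 := by
      intro a
      have h : αred K hK F p (Sum.inr (Sum.inl a)) = 0 := by
        simp [αred, α1, βf, ix, iu1, iv]
      rw [h, zero_mul]
    have e3 : ∀ a : Unit, αred K hK F p (Sum.inr (Sum.inr (Sum.inl a))) * pd c (fun q => Dvf F q (Sum.inr (Sum.inr (Sum.inl a)))) p = pd c F p := by
      intro a
      have h : αred K hK F p (Sum.inr (Sum.inr (Sum.inl a))) = 1 := by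
        simp [αred, α1, βf, ix, iu1, iv]
      have h' : (fun q : Pt K => Dvf F q (Sum.inr (Sum.inr (Sum.inl a)))) = F := rfl
      rw [h, h', one_mul]
    have e4 : ∀ r : Fin (K+1),
        αred K hK F p (Sum.inr (Sum.inr (Sum.inr r))) * pd c (fun q => Dvf F q (Sum.inr (Sum.inr (Sum.inr r)))) p
        = if r = (⟨1, h1⟩ : Fin (K+1)) then -(pd (iv K 2 h2) F p * (if iv K 2 h2 = c then 1 else 0)) else 0 := by
      intro r
      by_cases hr : r = (⟨1, h1⟩ : Fin (K+1))
      · subst hr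
        rw [if_pos rfl]
        have ha : αred K hK F p (Sum.inr (Sum.inr (Sum.inr (⟨1, h1⟩ : Fin (K+1))))) = -(pd (iv K 2 h2) F p) := by
          simp [αred, α1, βf, ix, iu1, iv]
        have hfun : (fun q : Pt K => Dvf F q (Sum.inr (Sum.inr (Sum.inr (⟨1, h1⟩ : Fin (K+1)))))) = fun q => q (iv K 2 h2) := by
          funext q
          show (if h : 1 + 1 < K + 1 then q (iv K (1+1) h) else 0) = q (iv K 2 h2)
          rw [dif_pos h1']
        rw [ha, hfun, pd_coord]
        ring
      · rw [if_neg hr]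
        have ha : αred K hK F p (Sum.inr (Sum.inr (Sum.inr r))) = 0 := by
          simp [αred, α1, βf, ix, iu1, iv, hr]
        rw [ha, zero_mul]
    rw [Fintype.sum_sum_type, Fintype.sum_sum_type, Fintype.sum_sum_type]
    simp only [e1, e2, e3, e4]
    simp [Finset.sum_ite_eq']
    ring
  rw [lieD, hsum2]
  rcases c with ⟨⟩ | ⟨⟩ | ⟨⟩ | r
  -- case c = x
  · have hDopF : Dop F F p = pd (Sum.inl () : Coord K) F p
        + p (iu1 K) * pd (Sum.inr (Sum.inl ()) : Coord K) F p
        + F p * pd (Sum.inr (Sum.inr (Sum.inl ())) : Coord K) F p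
        + (p (iv K 1 h1) * pd (iv K 0 h0) F p + p (iv K 2 h2) * pd (iv K 1 h1) F p
           + p (iv K 3 h3) * pd (iv K 2 h2) F p) := by
      have e : ∀ r : Fin (K+1),
          Dvf F p (Sum.inr (Sum.inr (Sum.inr r))) * pd (Sum.inr (Sum.inr (Sum.inr r))) F p
          = (if r = (⟨0, h0⟩ : Fin (K+1)) then p (iv K 1 h1) * pd (iv K 0 h0) F p else 0)
            + (if r = (⟨1, h1⟩ : Fin (K+1)) then p (iv K 2 h2) * pd (iv K 1 h1) F p else 0)
            + (if r = (⟨2, h2⟩ : Fin (K+1)) then p (iv K 3 h3) * pd (iv K 2 h2) F p else 0) := by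
        intro r
        by_cases hr0 : r = (⟨0, h0⟩ : Fin (K+1))
        · subst hr0
          have hD : Dvf F p (Sum.inr (Sum.inr (Sum.inr (⟨0, h0⟩ : Fin (K+1))))) = p (iv K 1 h1) := by
            show (if h : 0 + 1 < K + 1 then p (iv K (0+1) h) else 0) = _
            rw [dif_pos h1]
          rw [hD, if_pos rfl, if_neg (by simp only [Fin.mk.injEq]; omega),
            if_neg (by simp only [Fin.mk.injEq]; omega), add_zero, add_zero]
          rfl
        · by_cases hr1 : r = (⟨1, h1⟩ : Fin (K+1))
          · subst hr1
            have hD : Dvf F p (Sum.inr (Sum.inr (Sum.inr (⟨1, h1⟩ : Fin (K+1))))) = p (iv K 2 h2) := by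
              show (if h : 1 + 1 < K + 1 then p (iv K (1+1) h) else 0) = _
              rw [dif_pos h1']
            rw [hD, if_pos rfl, if_neg (by simp only [Fin.mk.injEq]; omega),
              if_neg (by simp only [Fin.mk.injEq]; omega), zero_add, add_zero]
            rfl
          · by_cases hr2 : r = (⟨2, h2⟩ : Fin (K+1))
            · subst hr2
              have hD : Dvf F p (Sum.inr (Sum.inr (Sum.inr (⟨2, h2⟩ : Fin (K+1))))) = p (iv K 3 h3) := by
                show (if h : 2 + 1 < K + 1 then p (iv K (2+1) h) else 0) = _
                rw [dif_pos h3]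
              rw [hD, if_pos rfl, if_neg (by simp only [Fin.mk.injEq]; omega),
                if_neg (by simp only [Fin.mk.injEq]; omega), zero_add, zero_add]
              rfl
            · have h3r : 3 ≤ (r : ℕ) := by
                have e0 : (r : ℕ) ≠ 0 := fun hv => hr0 (Fin.ext hv)
                have e1 : (r : ℕ) ≠ 1 := fun hv => hr1 (Fin.ext hv)
                have e2 : (r : ℕ) ≠ 2 := fun hv => hr2 (Fin.ext hv)
                omega
              have hz : pd (Sum.inr (Sum.inr (Sum.inr r)) : Coord K) F p = 0 :=
                pd_F_zero F hF hdep (r : ℕ) r.isLt h3r p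
              rw [hz, mul_zero, if_neg hr0, if_neg hr1, if_neg hr2, add_zero, add_zero]
      rw [Dop, Fintype.sum_sum_type, Fintype.sum_sum_type, Fintype.sum_sum_type]
      simp only [e]
      rw [Finset.sum_add_distrib, Finset.sum_add_distrib]
      rw [Finset.sum_ite_eq', Finset.sum_ite_eq', Finset.sum_ite_eq']
      simp [Finset.sum_ite_eq', Dvf]
      ring
    have hfx : (fun q => αred K hK F q (Sum.inl ())) =
        fun q => pd (iv K 2 h2) F q * q (iv K 2 h2) - F q := by
      funext q
      simp [αred, α1, βf, ix, iu1, iv]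
      ring
    have hpdx : ∀ b : Coord K, pd b (fun q => pd (iv K 2 h2) F q * q (iv K 2 h2) - F q) p
        = pd b (pd (iv K 2 h2) F) p * p (iv K 2 h2)
          + pd (iv K 2 h2) F p * (if iv K 2 h2 = b then 1 else 0) - pd b F p := by
      intro b
      rw [pd_sub b p (f := fun q => pd (iv K 2 h2) F q * q (iv K 2 h2)) ((hGd p).mul (diffAt_coord _ p)) (hFd p),
        pd_mul b p (hGd p) (diffAt_coord _ p), pd_coord]
    have hDvf2 : Dvf F p (iv K 2 h2) = p (iv K 3 h3) := by
      show (if h : 2 + 1 < K + 1 then p (iv K (2+1) h) else 0) = _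
      rw [dif_pos h3]
    have hs1x : (∑ b : Coord K, Dvf F p b * pd b (fun q => pd (iv K 2 h2) F q * q (iv K 2 h2) - F q) p)
        = Dop F (pd (iv K 2 h2) F) p * p (iv K 2 h2)
          + pd (iv K 2 h2) F p * p (iv K 3 h3) - Dop F F p := by
      calc (∑ b : Coord K, Dvf F p b * pd b (fun q => pd (iv K 2 h2) F q * q (iv K 2 h2) - F q) p)
          = ∑ b : Coord K, (Dvf F p b * pd b (pd (iv K 2 h2) F) p * p (iv K 2 h2)
              + (if iv K 2 h2 = b then Dvf F p b * pd (iv K 2 h2) F p else 0)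
              - Dvf F p b * pd b F p) := by
            refine Finset.sum_congr rfl fun b _ => ?_
            rw [hpdx b]
            by_cases hb : iv K 2 h2 = b
            · rw [if_pos hb, if_pos hb]; ring
            · rw [if_neg hb, if_neg hb]; ring
        _ = _ := by
            rw [Finset.sum_sub_distrib, Finset.sum_add_distrib, ← Finset.sum_mul,
              Finset.sum_ite_eq, Dop, Dop]
            simp [hDvf2]
            ring
    rw [hfx, hs1x, hDopF]
    simp [α0, α1, βf, αred, Acoef, Dop, ix, iu0, iu1, iv]
    ring
  -- case c = u0
  · have hf : (fun q => αred K hK F q (Sum.inr (Sum.inl ()))) = fun _ => (0:ℝ) := by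
      funext q
      simp [αred, α1, βf, ix, iu1, iv]
    rw [hf]
    simp [pd_const, α0, α1, βf, αred, Acoef, ix, iu0, iu1, iv]
  -- case c = u1
  · have hf : (fun q => αred K hK F q (Sum.inr (Sum.inr (Sum.inl ())))) = fun _ => (1:ℝ) := by
      funext q
      simp [αred, α1, βf, ix, iu1, iv]
    rw [hf]
    simp [pd_const, α0, α1, βf, αred, Acoef, ix, iu0, iu1, iv]
  -- case c = v_r
  · rcases r with ⟨rv, hrv⟩
    rcases rv with _ | _ | _ | n
    · -- v_0
      have hf : (fun q => αred K hK F q (Sum.inr (Sum.inr (Sum.inr (⟨0, hrv⟩ : Fin (K+1)))))) = fun _ => (0:ℝ) := by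
        funext q
        simp [αred, α1, βf, ix, iu1, iv, Fin.ext_iff]
      rw [hf]
      simp [pd_const, α0, α1, βf, αred, Acoef, ix, iu0, iu1, iv, Fin.ext_iff]
    · -- v_1
      have hf : (fun q => αred K hK F q (Sum.inr (Sum.inr (Sum.inr (⟨1, hrv⟩ : Fin (K+1)))))) =
          fun q => -(pd (iv K 2 h2) F q) := by
        funext q
        simp [αred, α1, βf, ix, iu1, iv, Fin.ext_iff]
      rw [hf]
      have hs1 : (∑ b : Coord K, Dvf F p b * pd b (fun q => -(pd (iv K 2 h2) F q)) p)
          = -Dop F (pd (iv K 2 h2) F) p := by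
        rw [Dop, ← Finset.sum_neg_distrib]
        refine Finset.sum_congr rfl fun b _ => ?_
        rw [pd_neg]
        ring
      rw [hs1]
      simp [α0, α1, βf, αred, Acoef, ix, iu0, iu1, iv, Fin.ext_iff]
      ring
    · -- v_2
      have hf : (fun q => αred K hK F q (Sum.inr (Sum.inr (Sum.inr (⟨2, hrv⟩ : Fin (K+1)))))) = fun _ => (0:ℝ) := by
        funext q
        simp [αred, α1, βf, ix, iu1, iv, Fin.ext_iff]
      rw [hf]
      simp [pd_const, α0, α1, βf, αred, Acoef, ix, iu0, iu1, iv, Fin.ext_iff]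
    · -- v_{n+3}
      have hf : (fun q => αred K hK F q (Sum.inr (Sum.inr (Sum.inr (⟨n+3, hrv⟩ : Fin (K+1)))))) = fun _ => (0:ℝ) := by
        funext q
        simp [αred, α1, βf, ix, iu1, iv, Fin.ext_iff]
      rw [hf]
      have hz : pd (Sum.inr (Sum.inr (Sum.inr (⟨n+3, hrv⟩ : Fin (K+1)))) : Coord K) F p = 0 :=
        pd_F_zero F hF hdep (n+3) hrv (by omega) p
      simp [pd_const, hz, α0, α1, βf, αred, Acoef, ix, iu0, iu1, iv, Fin.ext_iff]
end
end
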